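/- Let y, z : ℤ → {0,1}. For every b ∈ ℤ and a ∈ ℤ, the point g_{y,z}(a,b) + (1,0) is in the image of g_{y,z} if and only if y_a = 0 or z_b = 0; specifically, if y_a = 0 then g_{y,z}(a,b)+(1,0) = g_{y,z}(a+1,b), and if y_a = 1 and z_b = 0 then g_{y,z}(a,b)+(1,0) = g_{y,z}(a+1,b+1). -/

import Mathlib

/-!
Moving one step east in `(a, b)` changes `g(a, b)` by `(1, -y a)`, and moving one step
north-east changes it by `(1 + z b, 1 - y a)`; this gives the two explicit preimages.
Conversely, both signed sums are monotone. If `g(c, d) = g(a, b) + (1, 0)` with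
`y a = z b = 1`, then `c ≤ a` forces `d ≤ b` and hence `c ≥ a + 1`, while `c ≥ a + 1` forces
`d ≥ b + 1` (the sum of `y` grows by at least `y a = 1`) and hence `c ≤ a`.
-/

/-- Signed sum of `f` over the integer interval `[0, b)` (negated if `b < 0`). -/
noncomputable def sgnSum (f : ℤ → ℤ) (b : ℤ) : ℤ :=
  (∑ k ∈ Finset.Ico (0 : ℤ) b, f k) - (∑ k ∈ Finset.Ico b (0 : ℤ), f k)

/-- The wobbling map `g_{y,z}(a,b) = (a + Σ z over [0,b), b - Σ y over [0,a))`. -/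
noncomputable def gfun (y z : ℤ → ℤ) (p : ℤ × ℤ) : ℤ × ℤ :=
  (p.1 + sgnSum z p.2, p.2 - sgnSum y p.1)

lemma sgnSum_add_one (f : ℤ → ℤ) (b : ℤ) : sgnSum f (b + 1) = sgnSum f b + f b := by
  unfold sgnSum
  rcases le_or_gt 0 b with hb | hb
  · rw [← Finset.sum_Ico_add_eq_sum_Ico_add_one hb, Finset.Ico_eq_empty_of_le hb,
      Finset.Ico_eq_empty_of_le (show (0 : ℤ) ≤ b + 1 by omega)]
    ring
  · rw [← Finset.insert_Ico_add_one_left_eq_Ico hb, Finset.sum_insert (by simp),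
      Finset.Ico_eq_empty_of_le hb.le, Finset.Ico_eq_empty_of_le (show b + 1 ≤ 0 by omega)]
    ring

lemma sgnSum_monotone {f : ℤ → ℤ} (hf : ∀ k, 0 ≤ f k) : Monotone (sgnSum f) :=
  monotone_int_of_le_succ fun n => by rw [sgnSum_add_one]; linarith [hf n]

lemma gfun_add_one_fst (y z : ℤ → ℤ) (a b : ℤ) :
    gfun y z (a + 1, b) = gfun y z (a, b) + (1, -y a) := by
  simp only [gfun, sgnSum_add_one, Prod.mk_add_mk, Prod.mk.injEq]
  constructor <;> ring

lemma gfun_add_one_add_one (y z : ℤ → ℤ) (a b : ℤ) :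
    gfun y z (a + 1, b + 1) = gfun y z (a, b) + (1 + z b, 1 - y a) := by
  simp only [gfun, sgnSum_add_one, Prod.mk_add_mk, Prod.mk.injEq]
  constructor <;> ring

lemma gfun_ne_add_one_fst {y z : ℤ → ℤ} (hy : ∀ k, 0 ≤ y k) (hz : ∀ k, 0 ≤ z k) {a b : ℤ}
    (hya : 1 ≤ y a) (hzb : 1 ≤ z b) (p : ℤ × ℤ) : gfun y z p ≠ gfun y z (a, b) + (1, 0) := by
  obtain ⟨c, d⟩ := p
  intro h
  simp only [gfun, Prod.mk_add_mk, Prod.mk.injEq] at h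
  rcases le_or_gt c a with hca | hac
  · have hy_le := sgnSum_monotone hy hca
    have hz_le := sgnSum_monotone hz (show d ≤ b by omega)
    omega
  · have hy_le := sgnSum_monotone hy (show a + 1 ≤ c by omega)
    rw [sgnSum_add_one] at hy_le
    have hz_le := sgnSum_monotone hz (show b + 1 ≤ d by omega)
    rw [sgnSum_add_one] at hz_le
    omega

theorem gfun_east_neighbor (y z : ℤ → ℤ)
    (hy : ∀ k, y k = 0 ∨ y k = 1) (hz : ∀ k, z k = 0 ∨ z k = 1)
    (a b : ℤ) :
    (gfun y z (a, b) + (1, 0) ∈ Set.range (gfun y z) ↔ (y a = 0 ∨ z b = 0)) ∧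
    (y a = 0 → gfun y z (a + 1, b) = gfun y z (a, b) + (1, 0)) ∧
    (y a = 1 → z b = 0 → gfun y z (a + 1, b + 1) = gfun y z (a, b) + (1, 0)) := by
  have east (h : y a = 0) : gfun y z (a + 1, b) = gfun y z (a, b) + (1, 0) := by
    rw [gfun_add_one_fst, h, neg_zero]
  have northeast (hya : y a = 1) (hzb : z b = 0) :
      gfun y z (a + 1, b + 1) = gfun y z (a, b) + (1, 0) := by
    rw [gfun_add_one_add_one, hya, hzb, add_zero, sub_self]
  refine ⟨⟨?_, ?_⟩, east, northeast⟩
  · rintro ⟨p, hp⟩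
    by_contra! h
    have hy_nonneg (k : ℤ) : 0 ≤ y k := by rcases hy k with hk | hk <;> omega
    have hz_nonneg (k : ℤ) : 0 ≤ z k := by rcases hz k with hk | hk <;> omega
    have hya : 1 ≤ y a := by rcases hy a with hk | hk <;> omega
    have hzb : 1 ≤ z b := by rcases hz b with hk | hk <;> omega
    exact gfun_ne_add_one_fst hy_nonneg hz_nonneg hya hzb p hp
  · rintro (hya | hzb)
    · exact ⟨_, east hya⟩
    · rcases hy a with hya | hya
      exacts [⟨_, east hya⟩, ⟨_, northeast hya hzb⟩]
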